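/- Let Ω ⊂ ℝⁿ be a bounded domain and let u be a stable solution of −Lu = f(u) in Ω, where f ∈ C¹(ℝ) and the coefficients of L are smooth on cl Ω. Then for every ξ ∈ C¹_c(Ω): ∫_Ω f′(u) ξ² dx ≤ ∫_Ω |∇ξ − (1/2) ξ A⁻¹(x) b̂(x)|²_{A(x)} dx, where b̂_i(x) := b_i(x) − Σ_k ∂_k a_{ki}(x). -/

import Mathlib

/-!
Test the stability inequality `-Lφ ≥ f'(u) φ` against `η = ξ² / φ ≥ 0`, which is `C¹` with
compact support in `Ω`. Writing `L` in divergence form, `Lφ = div (A∇φ) + b̂·∇φ`, and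
integrating by parts gives `∫ f'(u) ξ² ≤ ∫ A∇φ·∇η - (b̂·∇φ) η`. Since
`∇η = 2 (ξ/φ) ∇ξ - (ξ/φ)² ∇φ`, completing the square shows that this integrand equals
`|∇ξ - ½ ξ A⁻¹b̂|²_A - |∇ξ - (ξ/φ) ∇φ - ½ ξ A⁻¹b̂|²_A`, and the second term is nonnegative
because `A` is positive definite.
-/

open MeasureTheory Metric Set Real

noncomputable section

/-- Euclidean space `ℝⁿ`. -/
abbrev En (n : ℕ) := EuclideanSpace ℝ (Fin n)

variable {n : ℕ}

/-- Partial derivative `∂ᵢu(x)`. -/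
def pd (i : Fin n) (u : En n → ℝ) (x : En n) : ℝ :=
  fderiv ℝ u x (EuclideanSpace.single i 1)

/-- Second partial derivative `∂²ᵢⱼu(x)`. -/
def pd2 (i j : Fin n) (u : En n → ℝ) (x : En n) : ℝ :=
  fderiv ℝ (fun y => pd j u y) x (EuclideanSpace.single i 1)

/-- Operator norm of the Hessian `D²u(x)`. -/
def hessNorm (u : En n → ℝ) (x : En n) : ℝ :=
  ‖fderiv ℝ (fderiv ℝ u) x‖

/-- Euclidean norm of the gradient `|∇u(x)|`. -/
def gradNorm (u : En n → ℝ) (x : En n) : ℝ :=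
  Real.sqrt (∑ i, (pd i u x) ^ 2)

/-- Radial derivative `u_r(x) = (x/|x|)·∇u(x)`. -/
def radDeriv (u : En n → ℝ) (x : En n) : ℝ :=
  (∑ i, x i * pd i u x) / ‖x‖

/-- Quadratic form `∑ᵢⱼ Mᵢⱼ vᵢ vⱼ`, i.e. the square `|v|_M²` of the weighted norm. -/
def wsq (M : Fin n → Fin n → ℝ) (v : Fin n → ℝ) : ℝ :=
  ∑ i, ∑ j, M i j * v i * v j

/-- The operator `Lu = ∑ aᵢⱼ(x) ∂²ᵢⱼu + ∑ bᵢ(x) ∂ᵢu`. -/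
def Lop (A : En n → Fin n → Fin n → ℝ) (b : En n → En n) (u : En n → ℝ) (x : En n) : ℝ :=
  (∑ i, ∑ j, A x i j * pd2 i j u x) + ∑ i, b x i * pd i u x

/-- Uniform ellipticity `λ ≤ A(x) ≤ Λ` on `s`. -/
def UnifElliptic (A : En n → Fin n → Fin n → ℝ) (lam Lam : ℝ) (s : Set (En n)) : Prop :=
  ∀ x ∈ s, ∀ p : En n, ‖p‖ = 1 →
    lam ≤ wsq (A x) (fun i => p i) ∧ wsq (A x) (fun i => p i) ≤ Lam

/-- Symmetry of the coefficient matrix on `s`. -/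
def SymmOn (A : En n → Fin n → Fin n → ℝ) (s : Set (En n)) : Prop :=
  ∀ x ∈ s, ∀ i j, A x i j = A x j i

/-- Smoothness of the data on the closed unit ball, plus symmetry of `A`. -/
def Setting (A : En n → Fin n → Fin n → ℝ) (b : En n → En n) (u : En n → ℝ) : Prop :=
  ContDiffOn ℝ (⊤ : ℕ∞) A (closedBall (0 : En n) 1) ∧
  ContDiffOn ℝ (⊤ : ℕ∞) b (closedBall (0 : En n) 1) ∧
  ContDiffOn ℝ (⊤ : ℕ∞) u (closedBall (0 : En n) 1) ∧
  SymmOn A (closedBall (0 : En n) 1)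

/-- `u` is a stable solution of `-Lu = f(u)` in `B₁`. -/
def IsStableSolution (A : En n → Fin n → Fin n → ℝ) (b : En n → En n)
    (f : ℝ → ℝ) (u : En n → ℝ) : Prop :=
  (∀ x ∈ ball (0 : En n) 1, -(Lop A b u x) = f (u x)) ∧
  ∃ φ : En n → ℝ,
    ContDiffOn ℝ 2 φ (ball (0 : En n) 1) ∧ ContinuousOn φ (closedBall (0 : En n) 1) ∧
    (∀ x ∈ ball (0 : En n) 1, 0 < φ x) ∧
    (∀ x ∈ sphere (0 : En n) 1, φ x = 0) ∧
    (∀ x ∈ ball (0 : En n) 1, deriv f (u x) * φ x ≤ -(Lop A b φ x))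

/-- `‖DA‖_{C⁰(cl B₁)}`. -/
def supDA (A : En n → Fin n → Fin n → ℝ) : ℝ :=
  ⨆ x ∈ closedBall (0 : En n) 1, ‖fderivWithin ℝ A (closedBall (0 : En n) 1) x‖

/-- `‖b‖_{C⁰(cl B₁)}`. -/
def supB (b : En n → En n) : ℝ :=
  ⨆ x ∈ closedBall (0 : En n) 1, ‖b x‖

/-- `‖A‖_{C¹(cl B₁)}`. -/
def normC1A (A : En n → Fin n → Fin n → ℝ) : ℝ :=
  ⨆ x ∈ closedBall (0 : En n) 1,
    (‖A x‖ + ‖fderivWithin ℝ A (closedBall (0 : En n) 1) x‖)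

/-- `b̂ᵢ(x) = bᵢ(x) − ∑ₖ ∂ₖa_{ki}(x)`, so that `Lu = div(A∇u) + b̂·∇u`. -/
def bhat (A : En n → Fin n → Fin n → ℝ) (b : En n → En n) (x : En n) : Fin n → ℝ :=
  fun i => b x i - ∑ k, pd k (fun y => A y k i) x

/-- `M⁻¹ v` for a square coefficient matrix `M`. -/
def invMulVec (M : Fin n → Fin n → ℝ) (v : Fin n → ℝ) : Fin n → ℝ :=
  ((Matrix.of M)⁻¹).mulVec v

open Matrix

lemma wsq_eq_dotProduct_mulVec (M : Fin n → Fin n → ℝ) (v : Fin n → ℝ) :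
    wsq M v = v ⬝ᵥ (Matrix.of M *ᵥ v) := by
  simp only [wsq, dotProduct, mulVec, of_apply, Finset.mul_sum]
  exact Finset.sum_congr rfl fun i _ => Finset.sum_congr rfl fun j _ => by ring

lemma wsq_smul (M : Fin n → Fin n → ℝ) (c : ℝ) (v : Fin n → ℝ) :
    wsq M (c • v) = c ^ 2 * wsq M v := by
  simp only [wsq_eq_dotProduct_mulVec, mulVec_smul, smul_dotProduct, dotProduct_smul, smul_eq_mul]
  ring

lemma posDef_of_le_wsq_of_norm_eq_one {lam : ℝ} (hlam : 0 < lam) {M : Fin n → Fin n → ℝ}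
    (hsym : ∀ i j, M i j = M j i) (hM : ∀ p : En n, ‖p‖ = 1 → lam ≤ wsq M (fun i => p i)) :
    (Matrix.of M).PosDef := by
  refine .of_dotProduct_mulVec_pos (IsHermitian.ext fun i j => (hsym i j).symm) fun v hv => ?_
  set x : En n := WithLp.toLp 2 v
  have hx : x ≠ 0 := fun h => hv (by simpa [x] using congrArg WithLp.ofLp h)
  have hunit : lam ≤ ‖x‖⁻¹ ^ 2 * wsq M v :=
    (hM (‖x‖⁻¹ • x) (by simpa using norm_smul_inv_norm (𝕜 := ℝ) hx)).trans_eq (wsq_smul M _ v)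
  rw [star_trivial, ← wsq_eq_dotProduct_mulVec]
  exact pos_of_mul_pos_right (hlam.trans_le hunit) (sq_nonneg _)

lemma dotProduct_mulVec_comm {ι : Type*} [Fintype ι] {M : Matrix ι ι ℝ} (hM : M.IsHermitian)
    (v w : ι → ℝ) : v ⬝ᵥ M *ᵥ w = w ⬝ᵥ M *ᵥ v := by
  rw [dotProduct_mulVec, dotProduct_comm, ← mulVec_transpose, (isHermitian_iff_isSymm.1 hM).eq]

lemma sub_le_dotProduct_mulVec_of_posSemidef {ι : Type*} [Fintype ι] {M : Matrix ι ι ℝ}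
    (hM : M.PosSemidef) (p q w : ι → ℝ) (s t : ℝ) :
    (M *ᵥ q) ⬝ᵥ ((2 * s / t) • p - (s / t) ^ 2 • q) - ((M *ᵥ w) ⬝ᵥ q) * (s ^ 2 / t)
      ≤ (p - (1 / 2 * s) • w) ⬝ᵥ M *ᵥ (p - (1 / 2 * s) • w) := by
  set r := p - (s / t) • q - (1 / 2 * s) • w
  have hcomm := dotProduct_mulVec_comm hM.isHermitian
  have hr : (p - (1 / 2 * s) • w) ⬝ᵥ M *ᵥ (p - (1 / 2 * s) • w) -
      ((M *ᵥ q) ⬝ᵥ ((2 * s / t) • p - (s / t) ^ 2 • q) - ((M *ᵥ w) ⬝ᵥ q) * (s ^ 2 / t))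
      = r ⬝ᵥ M *ᵥ r := by
    simp only [r, mulVec_sub, mulVec_smul, sub_dotProduct, dotProduct_sub,
      smul_dotProduct, dotProduct_smul, smul_eq_mul]
    rw [dotProduct_comm (M *ᵥ q) p, dotProduct_comm (M *ᵥ q) q, dotProduct_comm (M *ᵥ w) q,
      hcomm q p, hcomm w p, hcomm w q]
    ring
  have := hM.dotProduct_mulVec_nonneg r
  rw [star_trivial] at this
  linarith

lemma continuousOn_invMulVec {s : Set (En n)} {A : En n → Fin n → Fin n → ℝ}
    {v : En n → Fin n → ℝ} (hA : ContinuousOn A s)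
    (hdet : ∀ x ∈ s, IsUnit (Matrix.of (A x)).det) (hv : ContinuousOn v s) :
    ContinuousOn (fun x => invMulVec (A x) (v x)) s := by
  have hinv : ContinuousOn (fun x => (Matrix.of (A x))⁻¹) s := fun x hx => by
    refine (continuousAt_matrix_inv _ ?_).comp_continuousWithinAt (hA x hx)
    rw [Ring.inverse_eq_inv']
    exact continuousAt_inv₀ (hdet x hx).ne_zero
  exact (continuous_fst.matrix_mulVec continuous_snd).comp_continuousOn (hinv.prodMk hv)

lemma continuousOn_wsq {s : Set (En n)} {M : En n → Fin n → Fin n → ℝ} {v : En n → Fin n → ℝ}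
    (hM : ContinuousOn M s) (hv : ContinuousOn v s) :
    ContinuousOn (fun x => wsq (M x) (v x)) s := by
  simp only [wsq]
  fun_prop

def grad (u : En n → ℝ) (x : En n) : Fin n → ℝ := fun i => pd i u x

def flux (A : En n → Fin n → Fin n → ℝ) (φ : En n → ℝ) (x : En n) : Fin n → ℝ :=
  Matrix.of (A x) *ᵥ grad φ x

def divergence (F : En n → Fin n → ℝ) (x : En n) : ℝ := ∑ i, pd i (fun y => F y i) x

section PartialDerivatives

variable {g h : En n → ℝ} {x : En n} {s : Set (En n)}

lemma pd_mul (hg : DifferentiableAt ℝ g x) (hh : DifferentiableAt ℝ h x) (i : Fin n) :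
    pd i (fun y => g y * h y) x = pd i g x * h x + g x * pd i h x := by
  simp only [pd, fderiv_fun_mul hg hh, _root_.add_apply, _root_.smul_apply, smul_eq_mul]
  ring

lemma pd_sum {ι : Type*} {t : Finset ι} {g : ι → En n → ℝ}
    (hg : ∀ j ∈ t, DifferentiableAt ℝ (g j) x) (i : Fin n) :
    pd i (fun y => ∑ j ∈ t, g j y) x = ∑ j ∈ t, pd i (g j) x := by
  simp only [pd, fderiv_fun_sum hg, _root_.sum_apply]

lemma pd_inv (hh : DifferentiableAt ℝ h x) (hx : h x ≠ 0) (i : Fin n) :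
    pd i (fun y => (h y)⁻¹) x = -pd i h x / h x ^ 2 := by
  rw [pd, show (fun y => (h y)⁻¹) = (·⁻¹) ∘ h from rfl,
    ((hasDerivAt_inv hx).comp_hasFDerivAt x hh.hasFDerivAt).fderiv]
  simp only [_root_.smul_apply, smul_eq_mul, pd]
  ring

lemma grad_sq_div (hg : DifferentiableAt ℝ g x) (hh : DifferentiableAt ℝ h x) (hx : h x ≠ 0) :
    grad (fun y => g y ^ 2 / h y) x = (2 * g x / h x) • grad g x - (g x / h x) ^ 2 • grad h x := by
  ext i
  have hsq : DifferentiableAt ℝ (fun y => g y * g y) x := hg.mul hg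
  have hinv : DifferentiableAt ℝ (fun y => (h y)⁻¹) x := hh.inv hx
  simp only [div_eq_mul_inv, sq]
  rw [grad, pd_mul hsq hinv, pd_mul hg hg, pd_inv hh hx]
  simp only [grad, Pi.sub_apply, Pi.smul_apply, smul_eq_mul]
  field_simp
  ring

lemma pd_eq_zero_of_notMem_tsupport (hx : x ∉ tsupport g) (i : Fin n) : pd i g x = 0 := by
  rw [pd, image_eq_zero_of_notMem_tsupport fun h => hx (tsupport_fderiv_subset ℝ h),
    _root_.zero_apply]

lemma tsupport_pd_subset (g : En n → ℝ) (i : Fin n) : tsupport (pd i g) ⊆ tsupport g :=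
  tsupport_fderiv_apply_subset ℝ _

lemma ContDiffOn.contDiffOn_pd {m k : WithTop ℕ∞} (hg : ContDiffOn ℝ k g s) (hs : IsOpen s)
    (hmk : m + 1 ≤ k) (i : Fin n) : ContDiffOn ℝ m (pd i g) s :=
  (hg.fderiv_of_isOpen hs hmk).clm_apply contDiffOn_const

lemma ContDiffOn.continuousOn_pd {k : WithTop ℕ∞} (hg : ContDiffOn ℝ k g s) (hs : IsOpen s)
    (hk : 1 ≤ k) (i : Fin n) : ContinuousOn (pd i g) s :=
  (hg.continuousOn_fderiv_of_isOpen hs hk).clm_apply continuousOn_const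

lemma ContDiff.continuous_pd (hg : ContDiff ℝ 1 g) (i : Fin n) : Continuous (pd i g) :=
  (hg.continuous_fderiv one_ne_zero).clm_apply continuous_const

end PartialDerivatives

section DivergenceForm

variable {A : En n → Fin n → Fin n → ℝ} {b : En n → En n} {φ : En n → ℝ} {s : Set (En n)}

lemma flux_apply (A : En n → Fin n → Fin n → ℝ) (φ : En n → ℝ) (x : En n) (i : Fin n) :
    flux A φ x i = ∑ j, A x i j * pd j φ x := rfl

lemma Lop_eq_divergence_flux_add {x : En n}
    (hA : ∀ i j, DifferentiableAt ℝ (fun y => A y i j) x)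
    (hφ : ∀ j, DifferentiableAt ℝ (pd j φ) x) :
    Lop A b φ x = divergence (flux A φ) x + bhat A b x ⬝ᵥ grad φ x := by
  have hdiv : ∀ i, pd i (fun y => flux A φ y i) x =
      ∑ j, (pd i (fun y => A y i j) x * pd j φ x + A x i j * pd2 i j φ x) := fun i => by
    simp only [flux_apply]
    rw [pd_sum (g := fun j y => A y i j * pd j φ y) fun j _ => (hA i j).mul (hφ j)]
    exact Finset.sum_congr rfl fun j _ => pd_mul (hA i j) (hφ j) i
  have hswap : ∑ i, ∑ j, pd i (fun y => A y i j) x * pd j φ x =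
      ∑ j, (∑ k, pd k (fun y => A y k j) x) * pd j φ x := by
    rw [Finset.sum_comm]
    simp only [Finset.sum_mul]
  simp only [Lop, divergence, hdiv, bhat, grad, dotProduct, sub_mul, Finset.sum_add_distrib,
    Finset.sum_sub_distrib, hswap]
  ring

lemma contDiffOn_coeff (hA : ContDiffOn ℝ 1 A s) (i j : Fin n) :
    ContDiffOn ℝ 1 (fun y => A y i j) s :=
  contDiffOn_pi.1 (contDiffOn_pi.1 hA i) j

lemma contDiffOn_flux (hs : IsOpen s) (hA : ContDiffOn ℝ 1 A s) (hφ : ContDiffOn ℝ 2 φ s)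
    (i : Fin n) : ContDiffOn ℝ 1 (fun x => flux A φ x i) s := by
  simp only [flux_apply]
  exact .sum fun j _ => (contDiffOn_coeff hA i j).mul (hφ.contDiffOn_pd hs le_rfl j)

lemma continuousOn_bhat (hs : IsOpen s) (hA : ContDiffOn ℝ 1 A s) (hb : ContinuousOn b s)
    (i : Fin n) : ContinuousOn (fun x => bhat A b x i) s :=
  ((PiLp.continuous_apply 2 _ i).comp_continuousOn hb).sub
    (continuousOn_finsetSum _ fun k _ => (contDiffOn_coeff hA k i).continuousOn_pd hs le_rfl k)

lemma continuousOn_Lop (hs : IsOpen s) (hA : ContinuousOn A s) (hb : ContinuousOn b s)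
    (hφ : ContDiffOn ℝ 2 φ s) : ContinuousOn (Lop A b φ) s := by
  have hA' : ∀ i j, ContinuousOn (fun x => A x i j) s := fun i j =>
    (continuous_apply j).comp_continuousOn ((continuous_apply i).comp_continuousOn hA)
  have hpd2 : ∀ i j, ContinuousOn (pd2 i j φ) s := fun i j =>
    (hφ.contDiffOn_pd hs (m := 1) le_rfl j).continuousOn_pd hs le_rfl i
  exact .add (continuousOn_finsetSum _ fun i _ => continuousOn_finsetSum _ fun j _ =>
    (hA' i j).mul (hpd2 i j)) (continuousOn_finsetSum _ fun i _ =>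
    ((PiLp.continuous_apply 2 _ i).comp_continuousOn hb).mul (hφ.continuousOn_pd hs (by simp) i))

end DivergenceForm

section Integration

variable {X : Type*} [TopologicalSpace X] [T2Space X] [MeasurableSpace X] [OpensMeasurableSpace X]
  {μ : Measure X} [IsFiniteMeasureOnCompacts μ] {s K : Set X} {g h : X → ℝ}

lemma ContinuousOn.integrable_of_eq_zero_off (hg : ContinuousOn g s) (hK : IsCompact K)
    (hKs : K ⊆ s) (hz : ∀ x ∉ K, g x = 0) : Integrable g μ :=
  (integrableOn_iff_integrable_of_support_subset (Function.support_subset_iff'.2 hz)).1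
    ((hg.mono hKs).integrableOn_compact hK)

lemma ContinuousOn.integrable_mul_of_tsupport_subset (hg : ContinuousOn g s)
    (hh : ContinuousOn h s) (hhc : HasCompactSupport h) (hhs : tsupport h ⊆ s) :
    Integrable (fun x => g x * h x) μ :=
  (hg.mul hh).integrable_of_eq_zero_off hhc hhs fun x hx => by
    rw [Pi.mul_apply, image_eq_zero_of_notMem_tsupport hx, mul_zero]

end Integration

lemma ContDiffOn.contDiff_of_tsupport_subset {E F : Type*} [NormedAddCommGroup E]
    [NormedSpace ℝ E] [NormedAddCommGroup F] [NormedSpace ℝ F] {f : E → F} {s : Set E}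
    {k : WithTop ℕ∞} (hf : ContDiffOn ℝ k f s) (hs : IsOpen s) (hfs : tsupport f ⊆ s) :
    ContDiff ℝ k f :=
  contDiff_iff_contDiffAt.2 fun x => by
    by_cases hx : x ∈ s
    · exact hf.contDiffAt (hs.mem_nhds hx)
    · exact contDiffAt_const.congr_of_eventuallyEq
        (notMem_tsupport_iff_eventuallyEq.1 fun h => hx (hfs h))

lemma tsupport_sq_div_subset {X : Type*} [TopologicalSpace X] (ξ φ : X → ℝ) :
    tsupport (fun x => ξ x ^ 2 / φ x) ⊆ tsupport ξ :=
  closure_mono (Function.support_subset_iff'.2 fun x hx => by simp [Function.notMem_support.1 hx])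

lemma HasCompactSupport.sq_div {X : Type*} [TopologicalSpace X] {ξ : X → ℝ}
    (hξ : HasCompactSupport ξ) (φ : X → ℝ) : HasCompactSupport (fun x => ξ x ^ 2 / φ x) :=
  hξ.mono' ((subset_tsupport _).trans (tsupport_sq_div_subset ξ φ))

lemma contDiff_sq_div {E : Type*} [NormedAddCommGroup E] [NormedSpace ℝ E] {ξ φ : E → ℝ}
    {s : Set E} (hs : IsOpen s) (hξ : ContDiff ℝ 1 ξ) (hξs : tsupport ξ ⊆ s)
    (hφ : ContDiffOn ℝ 1 φ s) (hφs : ∀ x ∈ s, φ x ≠ 0) : ContDiff ℝ 1 (fun x => ξ x ^ 2 / φ x) :=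
  ((hξ.pow 2).contDiffOn.div hφ hφs).contDiff_of_tsupport_subset hs
    ((tsupport_sq_div_subset ξ φ).trans hξs)

section IntegrationByParts

variable {s : Set (En n)} {η : En n → ℝ}

lemma integrable_mul_pd {F : En n → ℝ} (hF : ContinuousOn F s) (hη : ContDiff ℝ 1 η)
    (hηc : HasCompactSupport η) (hηs : tsupport η ⊆ s) (i : Fin n) :
    Integrable (fun x => F x * pd i η x) :=
  hF.integrable_mul_of_tsupport_subset (hη.continuous_pd i).continuousOn
    (hηc.fderiv_apply ℝ _) ((tsupport_pd_subset η i).trans hηs)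

lemma integrable_dotProduct_grad {F : En n → Fin n → ℝ}
    (hF : ∀ i, ContinuousOn (fun x => F x i) s) (hη : ContDiff ℝ 1 η)
    (hηc : HasCompactSupport η) (hηs : tsupport η ⊆ s) :
    Integrable (fun x => F x ⬝ᵥ grad η x) :=
  integrable_finsetSum _ fun i _ => integrable_mul_pd (hF i) hη hηc hηs i

lemma setIntegral_pd_mul_eq_neg {F : En n → ℝ} (hs : IsOpen s) (hF : ContDiffOn ℝ 1 F s)
    (hη : ContDiff ℝ 1 η) (hηc : HasCompactSupport η) (hηs : tsupport η ⊆ s) (i : Fin n) :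
    ∫ x in s, pd i F x * η x = -∫ x in s, F x * pd i η x := by
  have hoff : ∀ x ∉ s, x ∉ tsupport η := fun x hx h => hx (hηs h)
  have hibp := integral_mul_fderiv_eq_neg_fderiv_mul_of_integrable
    (μ := volume) (v := EuclideanSpace.single i 1)
    ((hF.continuousOn_pd hs le_rfl i).integrable_mul_of_tsupport_subset
      hη.continuous.continuousOn hηc hηs)
    (integrable_mul_pd hF.continuousOn hη hηc hηs i)
    (hF.continuousOn.integrable_mul_of_tsupport_subset hη.continuous.continuousOn hηc hηs)
    (fun x hx => (hF.differentiableOn one_ne_zero x (hηs hx)).differentiableAt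
      (hs.mem_nhds (hηs hx)))
    (fun x _ => hη.differentiable one_ne_zero x)
  rw [setIntegral_eq_integral_of_forall_compl_eq_zero fun x hx => by
      rw [image_eq_zero_of_notMem_tsupport (hoff x hx), mul_zero],
    setIntegral_eq_integral_of_forall_compl_eq_zero fun x hx => by
      rw [pd_eq_zero_of_notMem_tsupport (hoff x hx), mul_zero]]
  simp only [pd] at hibp ⊢
  rw [hibp, neg_neg]

lemma setIntegral_divergence_mul_eq_neg {F : En n → Fin n → ℝ} (hs : IsOpen s)
    (hF : ∀ i, ContDiffOn ℝ 1 (fun x => F x i) s) (hη : ContDiff ℝ 1 η)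
    (hηc : HasCompactSupport η) (hηs : tsupport η ⊆ s) :
    ∫ x in s, divergence F x * η x = -∫ x in s, F x ⬝ᵥ grad η x := by
  simp only [divergence, dotProduct, grad, Finset.sum_mul]
  rw [integral_finsetSum _ fun i _ => ((hF i).continuousOn_pd hs le_rfl i
      |>.integrable_mul_of_tsupport_subset hη.continuous.continuousOn hηc hηs).integrableOn,
    integral_finsetSum _ fun i _ =>
      (integrable_mul_pd (hF i).continuousOn hη hηc hηs i).integrableOn,
    ← Finset.sum_neg_distrib]
  exact Finset.sum_congr rfl fun i _ => setIntegral_pd_mul_eq_neg hs (hF i) hη hηc hηs i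

end IntegrationByParts

section WeakForm

variable {A : En n → Fin n → Fin n → ℝ} {b : En n → En n} {φ η : En n → ℝ} {s : Set (En n)}

def weakIntegrand (A : En n → Fin n → Fin n → ℝ) (b : En n → En n) (φ η : En n → ℝ)
    (x : En n) : ℝ :=
  flux A φ x ⬝ᵥ grad η x - (bhat A b x ⬝ᵥ grad φ x) * η x

lemma continuousOn_bhat_dotProduct_grad (hs : IsOpen s) (hA : ContDiffOn ℝ 1 A s)
    (hb : ContinuousOn b s) (hφ : ContDiffOn ℝ 2 φ s) :
    ContinuousOn (fun x => bhat A b x ⬝ᵥ grad φ x) s :=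
  continuousOn_finsetSum _ fun i _ =>
    (continuousOn_bhat hs hA hb i).mul (hφ.continuousOn_pd hs (by simp) i)

lemma integrable_weakIntegrand (hs : IsOpen s) (hA : ContDiffOn ℝ 1 A s) (hb : ContinuousOn b s)
    (hφ : ContDiffOn ℝ 2 φ s) (hη : ContDiff ℝ 1 η) (hηc : HasCompactSupport η)
    (hηs : tsupport η ⊆ s) : Integrable (weakIntegrand A b φ η) :=
  (integrable_dotProduct_grad (fun i => (contDiffOn_flux hs hA hφ i).continuousOn) hη hηc hηs).sub
    ((continuousOn_bhat_dotProduct_grad hs hA hb hφ).integrable_mul_of_tsupport_subset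
      hη.continuous.continuousOn hηc hηs)

lemma setIntegral_neg_Lop_mul_eq (hs : IsOpen s) (hA : ContDiffOn ℝ 1 A s)
    (hb : ContinuousOn b s) (hφ : ContDiffOn ℝ 2 φ s) (hη : ContDiff ℝ 1 η)
    (hηc : HasCompactSupport η) (hηs : tsupport η ⊆ s) :
    ∫ x in s, -Lop A b φ x * η x = ∫ x in s, weakIntegrand A b φ η x := by
  have hbη : Integrable (fun x => (bhat A b x ⬝ᵥ grad φ x) * η x) :=
    (continuousOn_bhat_dotProduct_grad hs hA hb hφ).integrable_mul_of_tsupport_subset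
      hη.continuous.continuousOn hηc hηs
  have hdivη : Integrable (fun x => divergence (flux A φ) x * η x) :=
    (continuousOn_finsetSum _ fun i _ => (contDiffOn_flux hs hA hφ i).continuousOn_pd hs le_rfl i
      ).integrable_mul_of_tsupport_subset hη.continuous.continuousOn hηc hηs
  have hLop : ∀ x ∈ s, -Lop A b φ x * η x =
      -(divergence (flux A φ) x * η x) - (bhat A b x ⬝ᵥ grad φ x) * η x := fun x hx => by
    rw [Lop_eq_divergence_flux_add
      (fun i j => ((contDiffOn_coeff hA i j).differentiableOn one_ne_zero x hx).differentiableAt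
        (hs.mem_nhds hx))
      (fun j => ((hφ.contDiffOn_pd hs le_rfl j).differentiableOn one_ne_zero x hx).differentiableAt
        (hs.mem_nhds hx))]
    ring
  have hfluxη : Integrable (fun x => flux A φ x ⬝ᵥ grad η x) :=
    integrable_dotProduct_grad (fun i => (contDiffOn_flux hs hA hφ i).continuousOn) hη hηc hηs
  calc ∫ x in s, -Lop A b φ x * η x
      = ∫ x in s, (-(divergence (flux A φ) x * η x) - (bhat A b x ⬝ᵥ grad φ x) * η x) :=
        setIntegral_congr_fun hs.measurableSet hLop
    _ = -(∫ x in s, divergence (flux A φ) x * η x) -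
          ∫ x in s, (bhat A b x ⬝ᵥ grad φ x) * η x := by
        rw [integral_sub (f := fun x => -(divergence (flux A φ) x * η x)) hdivη.neg.integrableOn
          hbη.integrableOn, integral_neg]
    _ = (∫ x in s, flux A φ x ⬝ᵥ grad η x) - ∫ x in s, (bhat A b x ⬝ᵥ grad φ x) * η x := by
        rw [setIntegral_divergence_mul_eq_neg hs (contDiffOn_flux hs hA hφ) hη hηc hηs, neg_neg]
    _ = ∫ x in s, weakIntegrand A b φ η x :=
        (integral_sub hfluxη.integrableOn hbη.integrableOn).symm

lemma weakIntegrand_sq_div_le {ξ : En n → ℝ} {x : En n} (hM : (Matrix.of (A x)).PosDef)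
    (hξ : DifferentiableAt ℝ ξ x) (hφ : DifferentiableAt ℝ φ x) (hφx : φ x ≠ 0) :
    weakIntegrand A b φ (fun y => ξ y ^ 2 / φ y) x ≤
      wsq (A x) (grad ξ x - (1 / 2 * ξ x) • invMulVec (A x) (bhat A b x)) := by
  have hbhat : bhat A b x = Matrix.of (A x) *ᵥ invMulVec (A x) (bhat A b x) := by
    rw [invMulVec, mulVec_mulVec, mul_nonsing_inv _ ((isUnit_iff_isUnit_det _).1 hM.isUnit),
      one_mulVec]
  set w := invMulVec (A x) (bhat A b x)
  rw [weakIntegrand, grad_sq_div hξ hφ hφx, wsq_eq_dotProduct_mulVec, hbhat]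
  exact sub_le_dotProduct_mulVec_of_posSemidef hM.posSemidef _ _ w _ _

lemma setIntegral_mul_sq_le_setIntegral_neg_Lop_mul {c ξ : En n → ℝ} (hs : IsOpen s)
    (hA : ContinuousOn A s) (hb : ContinuousOn b s) (hφ : ContDiffOn ℝ 2 φ s)
    (hφpos : ∀ x ∈ s, 0 < φ x) (hc : ContinuousOn c s) (hcφ : ∀ x ∈ s, c x * φ x ≤ -Lop A b φ x)
    (hξ : Continuous ξ) (hξc : HasCompactSupport ξ) (hξs : tsupport ξ ⊆ s) :
    ∫ x in s, c x * ξ x ^ 2 ≤ ∫ x in s, -Lop A b φ x * (ξ x ^ 2 / φ x) := by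
  have hη : ContinuousOn (fun x => ξ x ^ 2 / φ x) s :=
    (hξ.pow 2).continuousOn.div hφ.continuousOn fun x hx => (hφpos x hx).ne'
  refine setIntegral_mono_on ?_ ?_ hs.measurableSet fun x hx => ?_
  · exact (hc.mul (hξ.pow 2).continuousOn |>.integrable_of_eq_zero_off hξc hξs fun x hx => by
      simp [image_eq_zero_of_notMem_tsupport hx]).integrableOn
  · exact ((continuousOn_Lop hs hA hb hφ).neg.integrable_mul_of_tsupport_subset hη (hξc.sq_div φ)
      ((tsupport_sq_div_subset ξ φ).trans hξs)).integrableOn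
  · have hφx := hφpos x hx
    calc c x * ξ x ^ 2 = c x * φ x * (ξ x ^ 2 / φ x) := by field_simp
      _ ≤ -Lop A b φ x * (ξ x ^ 2 / φ x) := mul_le_mul_of_nonneg_right (hcφ x hx) (by positivity)

lemma integrable_wsq_grad_sub_smul_invMulVec {ξ : En n → ℝ} (hs : IsOpen s)
    (hA : ContDiffOn ℝ 1 A s) (hb : ContinuousOn b s)
    (hdet : ∀ x ∈ s, IsUnit (Matrix.of (A x)).det) (hξ : ContDiff ℝ 1 ξ)
    (hξc : HasCompactSupport ξ) (hξs : tsupport ξ ⊆ s) :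
    Integrable fun x => wsq (A x) (grad ξ x - (1 / 2 * ξ x) • invMulVec (A x) (bhat A b x)) := by
  refine (continuousOn_wsq hA.continuousOn ?_).integrable_of_eq_zero_off hξc hξs fun x hx => ?_
  · exact (continuousOn_pi.2 fun i => (hξ.continuous_pd i).continuousOn).sub
      ((continuousOn_const.mul hξ.continuous.continuousOn).smul (continuousOn_invMulVec
        hA.continuousOn hdet (continuousOn_pi.2 (continuousOn_bhat hs hA hb))))
  · simp [wsq, grad, pd_eq_zero_of_notMem_tsupport hx, image_eq_zero_of_notMem_tsupport hx]

end WeakForm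

theorem stmt_8_general (n : ℕ) (lam Lam : ℝ) (hlam : 0 < lam)
    (Ω : Set (En n)) (hΩopen : IsOpen Ω)
    (A : En n → Fin n → Fin n → ℝ) (b : En n → En n) (f : ℝ → ℝ) (u : En n → ℝ)
    (hA : ContDiffOn ℝ (⊤ : ℕ∞) A (closure Ω))
    (hb : ContDiffOn ℝ (⊤ : ℕ∞) b (closure Ω))
    (hu : ContDiffOn ℝ (⊤ : ℕ∞) u (closure Ω))
    (hsym : ∀ x ∈ closure Ω, ∀ i j, A x i j = A x j i)
    (hell : ∀ x ∈ Ω, ∀ p : En n, ‖p‖ = 1 →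
      lam ≤ wsq (A x) (fun i => p i) ∧ wsq (A x) (fun i => p i) ≤ Lam)
    (hf : ContDiff ℝ 1 f)
    (hstable : ∃ φ : En n → ℝ, ContDiffOn ℝ 2 φ Ω ∧ ContinuousOn φ (closure Ω) ∧
      (∀ x ∈ Ω, 0 < φ x) ∧ (∀ x ∈ frontier Ω, φ x = 0) ∧
      (∀ x ∈ Ω, deriv f (u x) * φ x ≤ -(Lop A b φ x)))
    (ξ : En n → ℝ) (hξ : ContDiff ℝ 1 ξ) (hξc : HasCompactSupport ξ)
    (hξΩ : tsupport ξ ⊆ Ω) :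
    ∫ x in Ω, deriv f (u x) * ξ x ^ 2 ≤
      ∫ x in Ω, wsq (A x)
        (fun i => pd i ξ x - 1 / 2 * ξ x * invMulVec (A x) (bhat A b x) i) := by
  obtain ⟨φ, hφ, -, hφpos, -, hφstab⟩ := hstable
  have hA1 : ContDiffOn ℝ 1 A Ω := (hA.mono subset_closure).of_le (by exact_mod_cast le_top)
  have hbΩ : ContinuousOn b Ω := (hb.mono subset_closure).continuousOn
  have hPD : ∀ x ∈ Ω, (Matrix.of (A x)).PosDef := fun x hx =>
    posDef_of_le_wsq_of_norm_eq_one hlam (hsym x (subset_closure hx)) fun p hp =>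
      (hell x hx p hp).1
  have hηΩ := (tsupport_sq_div_subset ξ φ).trans hξΩ
  have hη := contDiff_sq_div hΩopen hξ hξΩ (hφ.of_le one_le_two) fun x hx => (hφpos x hx).ne'
  calc ∫ x in Ω, deriv f (u x) * ξ x ^ 2
      ≤ ∫ x in Ω, -Lop A b φ x * (ξ x ^ 2 / φ x) :=
        setIntegral_mul_sq_le_setIntegral_neg_Lop_mul hΩopen hA1.continuousOn hbΩ hφ hφpos
          ((hf.continuous_deriv le_rfl).comp_continuousOn (hu.mono subset_closure).continuousOn)
          hφstab hξ.continuous hξc hξΩ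
    _ = ∫ x in Ω, weakIntegrand A b φ (fun y => ξ y ^ 2 / φ y) x :=
        setIntegral_neg_Lop_mul_eq hΩopen hA1 hbΩ hφ hη (hξc.sq_div φ) hηΩ
    _ ≤ _ := setIntegral_mono_on
        (integrable_weakIntegrand hΩopen hA1 hbΩ hφ hη (hξc.sq_div φ) hηΩ).integrableOn
        (integrable_wsq_grad_sub_smul_invMulVec hΩopen hA1 hbΩ
          (fun x hx => (isUnit_iff_isUnit_det _).1 (hPD x hx).isUnit) hξ hξc hξΩ).integrableOn
        hΩopen.measurableSet fun x hx => weakIntegrand_sq_div_le (hPD x hx)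
          (hξ.differentiable one_ne_zero x)
          ((hφ.differentiableOn two_ne_zero x hx).differentiableAt (hΩopen.mem_nhds hx))
          (hφpos x hx).ne'

/-- inequality (1.8): the integral stability inequality
`∫ f'(u) ξ² ≤ ∫ |∇ξ − ½ ξ A⁻¹ b̂|²_{A(x)}` on a bounded domain `Ω`. -/
theorem stmt_8 (n : ℕ) (lam Lam : ℝ) (hlam : 0 < lam) (hlL : lam ≤ Lam)
    (Ω : Set (En n)) (hΩopen : IsOpen Ω) (hΩconn : IsConnected Ω)
    (hΩbdd : Bornology.IsBounded Ω)
    (A : En n → Fin n → Fin n → ℝ) (b : En n → En n) (f : ℝ → ℝ) (u : En n → ℝ)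
    (hA : ContDiffOn ℝ (⊤ : ℕ∞) A (closure Ω))
    (hb : ContDiffOn ℝ (⊤ : ℕ∞) b (closure Ω))
    (hu : ContDiffOn ℝ (⊤ : ℕ∞) u (closure Ω))
    (hsym : ∀ x ∈ closure Ω, ∀ i j, A x i j = A x j i)
    (hell : ∀ x ∈ Ω, ∀ p : En n, ‖p‖ = 1 →
      lam ≤ wsq (A x) (fun i => p i) ∧ wsq (A x) (fun i => p i) ≤ Lam)
    (hf : ContDiff ℝ 1 f)
    (heq : ∀ x ∈ Ω, -(Lop A b u x) = f (u x))
    (hstable : ∃ φ : En n → ℝ, ContDiffOn ℝ 2 φ Ω ∧ ContinuousOn φ (closure Ω) ∧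
      (∀ x ∈ Ω, 0 < φ x) ∧ (∀ x ∈ frontier Ω, φ x = 0) ∧
      (∀ x ∈ Ω, deriv f (u x) * φ x ≤ -(Lop A b φ x)))
    (ξ : En n → ℝ) (hξ : ContDiff ℝ 1 ξ) (hξc : HasCompactSupport ξ)
    (hξΩ : tsupport ξ ⊆ Ω) :
    ∫ x in Ω, deriv f (u x) * ξ x ^ 2 ≤
      ∫ x in Ω, wsq (A x)
        (fun i => pd i ξ x - 1 / 2 * ξ x * invMulVec (A x) (bhat A b x) i) :=
  stmt_8_general n lam Lam hlam Ω hΩopen A b f u hA hb hu hsym hell hf hstable ξ hξ hξc hξΩ
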